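/- The path Γ of the previous statement is continuous in t, satisfies Γ(0) = C and Γ(1) = C′, and projects to the constant path at (o₁,o₂) under π_{n+2,2}. Moreover Γ depends continuously on the pair (C,C′) of collinear configurations sharing obstacles (o₁,o₂). -/

import Mathlib

/-!
Each robot follows one fixed piecewise-affine function of `(v, xᵢ, x'ᵢ, t)` whose three pieces
agree at `t = 1/3` and `t = 2/3`, so it is jointly continuous; the lifting direction
`v = ν((o₂ - o₁)/‖o₂ - o₁‖)` depends continuously on the obstacles as long as `o₁ ≠ o₂`.
-/

noncomputable section

/-- `ℝ^{2ℓ}` with coordinates indexed by `Fin ℓ × Fin 2`. -/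
abbrev EucPairs (l : ℕ) := EuclideanSpace ℝ (Fin l × Fin 2)

/-- The map `ν(x₁,y₁,…,x_ℓ,y_ℓ) = (−y₁,x₁,…,−y_ℓ,x_ℓ)`. -/
def nuField (l : ℕ) : EucPairs l → EucPairs l :=
  fun v => WithLp.toLp 2 (fun ij => if ij.2 = 0 then -v (ij.1, 1) else v (ij.1, 0))

variable {l n : ℕ}

/-- The three-stage path of the `i`-th robot (`i` runs over `1,…,n`, here
encoded by `(i : Fin n)` with label `i+1`): rise off the line by `i·v`,
translate to above the target, then descend.  Here `v = ν(e_C)` with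
`e_C = (o₂−o₁)/‖o₂−o₁‖`. -/
def gammaRobot (o₁ o₂ : EucPairs l) (x x' : Fin n → EucPairs l)
    (i : Fin n) (t : ℝ) : EucPairs l :=
  let v := nuField l (‖o₂ - o₁‖⁻¹ • (o₂ - o₁))
  if t ≤ 1 / 3 then x i + (3 * t * ((i : ℕ) + 1 : ℝ)) • v
  else if t ≤ 2 / 3 then x i + (((i : ℕ) + 1 : ℝ)) • v + (3 * t - 1) • (x' i - x i)
  else x' i + ((((i : ℕ) + 1 : ℝ)) * (3 - 3 * t)) • v


/-- The full path `Γ(t) = (o₁, o₂, γ₁(t), …, γ_n(t))`. -/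
def gammaFull (q : EucPairs l × EucPairs l × (Fin n → EucPairs l) × (Fin n → EucPairs l))
    (t : ℝ) : Fin (2 + n) → EucPairs l :=
  Fin.append ![q.1, q.2.1] (fun i => gammaRobot q.1 q.2.1 q.2.2.1 q.2.2.2 i t)

/-- The set of pairs of collinear configurations sharing the obstacle pair. -/
def collinearPairs (l n : ℕ) :
    Set (EucPairs l × EucPairs l × (Fin n → EucPairs l) × (Fin n → EucPairs l)) :=
  {q | q.1 ≠ q.2.1 ∧ (∀ i, ∃ s : ℝ, q.2.2.1 i = q.1 + s • (q.2.1 - q.1)) ∧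
       (∀ i, ∃ s : ℝ, q.2.2.2 i = q.1 + s • (q.2.1 - q.1))}

section ThreeStagePath

variable {E : Type*} [AddCommGroup E] [Module ℝ E]

def threeStagePath (c : ℝ) (v a b : E) (t : ℝ) : E :=
  if t ≤ 1 / 3 then a + (3 * t * c) • v
  else if t ≤ 2 / 3 then a + c • v + (3 * t - 1) • (b - a)
  else b + (c * (3 - 3 * t)) • v

lemma threeStagePath_zero (c : ℝ) (v a b : E) : threeStagePath c v a b 0 = a := by
  simp [threeStagePath]

lemma threeStagePath_one (c : ℝ) (v a b : E) : threeStagePath c v a b 1 = b := by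
  norm_num [threeStagePath]

variable [TopologicalSpace E] [IsTopologicalAddGroup E] [ContinuousSMul ℝ E]

lemma continuous_threeStagePath (c : ℝ) :
    Continuous fun p : E × E × E × ℝ => threeStagePath c p.1 p.2.1 p.2.2.1 p.2.2.2 := by
  have agree_at_one_third (p : E × E × E × ℝ) (hp : p.2.2.2 = 1 / 3) :
      p.2.1 + (3 * p.2.2.2 * c) • p.1 =
        p.2.1 + c • p.1 + (3 * p.2.2.2 - 1) • (p.2.2.1 - p.2.1) := by
    rw [hp]; norm_num
  have agree_at_two_thirds (p : E × E × E × ℝ) (hp : p.2.2.2 = 2 / 3) :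
      p.2.1 + c • p.1 + (3 * p.2.2.2 - 1) • (p.2.2.1 - p.2.1) =
        p.2.2.1 + (c * (3 - 3 * p.2.2.2)) • p.1 := by
    rw [hp]; norm_num; abel
  refine Continuous.if_le (by fun_prop) ?_ (by fun_prop) (by fun_prop) fun p hp => ?_
  · refine Continuous.if_le (by fun_prop) (by fun_prop) (by fun_prop) (by fun_prop) agree_at_two_thirds
  · rw [if_pos (hp.trans_le (by norm_num))]
    exact agree_at_one_third p hp

end ThreeStagePath

lemma continuous_nuField (l : ℕ) : Continuous (nuField l) := by
  refine (PiLp.continuous_toLp 2 _).comp (continuous_pi fun ij => ?_)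
  split
  · exact ((continuous_apply _).comp (PiLp.continuous_ofLp 2 _)).neg
  · exact (continuous_apply _).comp (PiLp.continuous_ofLp 2 _)

lemma gammaRobot_eq_threeStagePath (o₁ o₂ : EucPairs l) (x x' : Fin n → EucPairs l)
    (i : Fin n) (t : ℝ) :
    gammaRobot o₁ o₂ x x' i t =
      threeStagePath ((i : ℕ) + 1 : ℝ) (nuField l (‖o₂ - o₁‖⁻¹ • (o₂ - o₁))) (x i) (x' i) t :=
  rfl

lemma continuousOn_normalize_sub {E : Type*} [NormedAddCommGroup E] [NormedSpace ℝ E] :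
    ContinuousOn (fun p : E × E => ‖p.2 - p.1‖⁻¹ • (p.2 - p.1)) {p | p.1 ≠ p.2} :=
  ((continuous_norm.comp (by fun_prop)).continuousOn.inv₀ fun _ hp =>
    norm_ne_zero_iff.mpr (sub_ne_zero_of_ne (Ne.symm hp))).smul (by fun_prop)

lemma continuousOn_gammaFull (l n : ℕ) :
    ContinuousOn (fun z : _ × ℝ => gammaFull z.1 z.2) (collinearPairs l n ×ˢ Set.univ) := by
  refine continuousOn_pi.mpr fun j => Fin.addCases (fun k => ?_) (fun i => ?_) j
  · simp only [gammaFull, Fin.append_left]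
    fin_cases k
    · exact (continuous_fst.fst).continuousOn
    · exact (continuous_fst.snd.fst).continuousOn
  · simp only [gammaFull, Fin.append_right, gammaRobot_eq_threeStagePath]
    have obstacles : Continuous
        (fun z : (EucPairs l × EucPairs l × (Fin n → EucPairs l) × (Fin n → EucPairs l)) × ℝ =>
          (z.1.1, z.1.2.1)) := by fun_prop
    have endpoints : Continuous
        (fun z : (EucPairs l × EucPairs l × (Fin n → EucPairs l) × (Fin n → EucPairs l)) × ℝ =>
          (z.1.2.2.1 i, z.1.2.2.2 i, z.2)) := by fun_prop
    have direction := (continuous_nuField l).comp_continuousOn <|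
      (continuousOn_normalize_sub (E := EucPairs l)).comp obstacles.continuousOn
        (s := collinearPairs l n ×ˢ Set.univ) fun _ hz => hz.1.1
    exact (continuous_threeStagePath _).comp_continuousOn
      (direction.prodMk endpoints.continuousOn)

/-- `Γ` is continuous in `t`, runs from `C` to `C′`, keeps the obstacles
`(o₁,o₂)` fixed (so it projects to the constant path under `π_{n+2,2}`), and
depends continuously on the pair `(C,C′)` of collinear configurations sharing
the obstacles. -/
theorem gammaFull_section_properties (l n : ℕ) :
    (∀ q ∈ collinearPairs l n, Continuous (gammaFull q)) ∧
    (∀ q ∈ collinearPairs l n,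
      gammaFull q 0 = Fin.append ![q.1, q.2.1] q.2.2.1 ∧
      gammaFull q 1 = Fin.append ![q.1, q.2.1] q.2.2.2) ∧
    (∀ q ∈ collinearPairs l n, ∀ t : ℝ, ∀ k : Fin 2,
      gammaFull q t (Fin.castAdd n k) = ![q.1, q.2.1] k) ∧
    ContinuousOn (fun z : _ × ℝ => gammaFull z.1 z.2)
      (collinearPairs l n ×ˢ Set.univ) := by
  refine ⟨fun q hq => ?_, fun q _ => ⟨?_, ?_⟩, fun q _ t k => ?_, continuousOn_gammaFull l n⟩
  · exact continuousOn_univ.mp <| (continuousOn_gammaFull l n).comp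
      (Continuous.prodMk_right q).continuousOn fun t _ => Set.mk_mem_prod hq (Set.mem_univ t)
  · simp only [gammaFull, gammaRobot_eq_threeStagePath, threeStagePath_zero]
  · simp only [gammaFull, gammaRobot_eq_threeStagePath, threeStagePath_one]
  · simp only [gammaFull, Fin.append_left]

end
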